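/- With notation as in the context, suppose M_λ = eM ∩ M is a free 𝒪-module of rank 1. Then the congruence module C_0^λ(M) is a cyclic 𝒪-module, C_0^λ(M) ≅ 𝒪/η_λ(M), and η_λ(M) ⊇ η_λ. -/

import Mathlib

/-!
For some `c ∈ 𝒪⁰` the element `c • e` comes from `T`, so multiplication by `c` embeds `e M` into
`M_λ ≅ 𝒪`. Hence `e M` is a cyclic `𝒪`-module, and so is its quotient `C₀^λ(M) ≅ 𝒪 ⧸ Ann`, whose
Fitting ideal is its annihilator. Since `T_E` is reduced, `e` kills `ker λ_E`, so every
`t ∈ Ann_T(ker λ)` satisfies `t = t e = λ(t) e` in `T_E`; thus `λ(t) e M = t M ⊆ M`, i.e. `λ(t)`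
annihilates `C₀^λ(M)`.
-/

/-- The 0-th Fitting ideal of a module `N` over a commutative ring `R`. -/
def fittingIdeal (R : Type*) [CommRing R] (N : Type*) [AddCommGroup N] [Module R N] :
    Ideal R :=
  Ideal.span { r : R | ∃ (n : ℕ) (π : (Fin n → R) →ₗ[R] N) (_ : Function.Surjective π)
    (A : Matrix (Fin n) (Fin n) R), (∀ j, π (fun i => A i j) = 0) ∧ r = A.det }

/-- The `𝒪`-submodule `e·M` of `M_E`. -/
noncomputable def eMsub {O TE M ME : Type*} [CommRing O] [CommRing TE] [Algebra O TE]
    [AddCommGroup M] [Module O M] [AddCommGroup ME] [Module O ME] [Module TE ME]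
    [IsScalarTower O TE ME] (e : TE) (iota : M →ₗ[O] ME) : Submodule O ME :=
  Submodule.span O {x : ME | ∃ m : M, x = e • iota m}

/-- The congruence module `C₀^λ(M) = e·M/(e·M ∩ M)`, formed inside `M_E`. -/
noncomputable abbrev C0M {O TE M ME : Type*} [CommRing O] [CommRing TE] [Algebra O TE]
    [AddCommGroup M] [Module O M] [AddCommGroup ME] [Module O ME] [Module TE ME]
    [IsScalarTower O TE ME] (e : TE) (iota : M →ₗ[O] ME) :=
  ↥(eMsub e iota) ⧸
    (Submodule.comap (eMsub e iota).subtype (eMsub e iota ⊓ LinearMap.range iota))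

namespace Module.IsPrincipal

variable {R N : Type*} [CommRing R] [AddCommGroup N] [Module R N] [Module.IsPrincipal R N]

theorem exists_forall_eq_smul : ∃ x : N, ∀ y : N, ∃ c : R, y = c • x := by
  refine ⟨Submodule.IsPrincipal.generator (⊤ : Submodule R N), fun y => ?_⟩
  obtain ⟨c, hc⟩ := Submodule.mem_span_singleton.mp
    ((Submodule.IsPrincipal.span_singleton_generator (⊤ : Submodule R N)).ge
      (Submodule.mem_top (x := y)))
  exact ⟨c, hc.symm⟩

theorem nonempty_linearEquiv_quotient_annihilator :
    Nonempty (N ≃ₗ[R] R ⧸ Module.annihilator R N) := by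
  set x := Submodule.IsPrincipal.generator (⊤ : Submodule R N)
  have hx : R ∙ x = ⊤ := Submodule.IsPrincipal.span_singleton_generator ⊤
  have hann : Module.annihilator R N = Ideal.torsionOf R N x := by
    rw [← Submodule.annihilator_top, ← hx, Ideal.annihilator_span_singleton_eq_torsionOf]
  exact ⟨(Submodule.quotEquivOfEq _ _ hann ≪≫ₗ Ideal.quotTorsionOfEquivSpanSingleton R N x ≪≫ₗ
    LinearEquiv.ofEq _ _ hx ≪≫ₗ Submodule.topEquiv).symm⟩

end Module.IsPrincipal

section Fitting

variable {R N : Type*} [CommRing R] [AddCommGroup N] [Module R N]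

theorem fittingIdeal_le_annihilator : fittingIdeal R N ≤ Module.annihilator R N := by
  rw [fittingIdeal, Ideal.span_le]
  rintro _ ⟨n, π, hπ, A, hcol, rfl⟩
  rw [SetLike.mem_coe, Module.mem_annihilator]
  intro x
  obtain ⟨v, rfl⟩ := hπ x
  have hπA : π ∘ₗ Matrix.toLin' A = 0 := by
    ext j
    simp only [LinearMap.coe_comp, Function.comp_apply, LinearMap.coe_single, Matrix.toLin'_apply,
      Matrix.mulVec_single_one, LinearMap.zero_apply]
    exact hcol j
  have hcramer : A.det • v = A.mulVec (A.adjugate.mulVec v) := by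
    rw [Matrix.mulVec_mulVec, Matrix.mul_adjugate, Matrix.smul_mulVec, Matrix.one_mulVec]
  rw [← map_smul, hcramer]
  exact LinearMap.congr_fun hπA _

theorem annihilator_le_fittingIdeal [Module.IsPrincipal R N] :
    Module.annihilator R N ≤ fittingIdeal R N := by
  intro r hr
  obtain ⟨x, hx⟩ := Module.IsPrincipal.exists_forall_eq_smul (R := R) (N := N)
  refine Ideal.subset_span ⟨1, LinearMap.toSpanSingleton R N x ∘ₗ LinearMap.proj 0, fun y => ?_,
    Matrix.of fun _ _ => r, fun _ => Module.mem_annihilator.mp hr x, by simp⟩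
  obtain ⟨a, rfl⟩ := hx y
  exact ⟨fun _ => a, rfl⟩

theorem fittingIdeal_eq_annihilator [Module.IsPrincipal R N] :
    fittingIdeal R N = Module.annihilator R N :=
  fittingIdeal_le_annihilator.antisymm annihilator_le_fittingIdeal

end Fitting


theorem Module.isPrincipal_of_injective {R P : Type*} [CommRing R] [IsPrincipalIdealRing R]
    [AddCommGroup P] [Module R P] {j : P →ₗ[R] R} (hj : Function.Injective j) :
    Module.IsPrincipal R P :=
  (LinearEquiv.ofInjective j hj).isPrincipal_iff.mpr
    (Module.isPrincipal_submodule_iff.mpr (IsPrincipalIdealRing.principal _))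

theorem IsLocalization.isReduced {R S : Type*} [CommRing R] [CommRing S] [Algebra R S]
    (M : Submonoid R) [IsLocalization M S] [IsReduced R] : IsReduced S :=
  isReduced_of_injective (IsLocalization.algEquiv M S (Localization M)).toRingHom
    (IsLocalization.algEquiv M S (Localization M)).injective

theorem AlgHom.mul_eq_smul_of_forall_isPrime_ne_ker {K A : Type*} [CommRing K] [CommRing A]
    [IsReduced A] [Algebra K A] (f : A →ₐ[K] K) {e : A}
    (he : ∀ P : Ideal A, P.IsPrime → P ≠ RingHom.ker f → e ∈ P) (x : A) :
    x * e = f x • e := by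
  have hker : x - algebraMap K A (f x) ∈ RingHom.ker f := by simp
  have hnil : (x - algebraMap K A (f x)) * e ∈ nilradical A := by
    rw [nilradical_eq_sInf, Submodule.mem_sInf]
    intro P hP
    by_cases hPk : P = RingHom.ker f
    · exact Ideal.mul_mem_right e P (hPk ▸ hker)
    · exact Ideal.mul_mem_left P _ (he P hP hPk)
  rw [mem_nilradical, isNilpotent_iff_eq_zero, sub_mul, sub_eq_zero] at hnil
  rw [hnil, Algebra.smul_def]

section Congruence

variable {O : Type*} [CommRing O] {E : Type*} [Field E] [Algebra O E]
  {T : Type*} [CommRing T] [Algebra O T]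
  {TE : Type*} [CommRing TE] [Algebra T TE] [Algebra E TE]
  [IsLocalization (Algebra.algebraMapSubmonoid T (nonZeroDivisors O)) TE]
  {lam : T →ₐ[O] O} {lamE : TE →ₐ[E] E}

theorem exists_smul_eq_algebraMap [Algebra O TE] [IsScalarTower O T TE] (x : TE) :
    ∃ c ∈ nonZeroDivisors O, ∃ t : T, c • x = algebraMap T TE t := by
  obtain ⟨⟨t, _, c, hc, rfl⟩, hs⟩ :=
    IsLocalization.surj (Algebra.algebraMapSubmonoid T (nonZeroDivisors O)) x
  refine ⟨c, hc, t, ?_⟩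
  rw [Algebra.smul_def, IsScalarTower.algebraMap_apply O T TE, mul_comm]
  exact hs

theorem algebraMap_mul_eq_zero_of_mem_annihilator_ker [IsFractionRing O E]
    (hlamE : ∀ t : T, lamE (algebraMap T TE t) = algebraMap O E (lam t))
    {t : T} (ht : t ∈ (RingHom.ker lam).annihilator) {y : TE} (hy : y ∈ RingHom.ker lamE) :
    algebraMap T TE t * y = 0 := by
  obtain ⟨⟨u, s⟩, hus⟩ :=
    IsLocalization.surj (Algebra.algebraMapSubmonoid T (nonZeroDivisors O)) y
  have hu : lam u = 0 := by
    apply IsFractionRing.injective O E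
    rw [← hlamE, ← hus, map_mul, RingHom.mem_ker.mp hy, zero_mul, map_zero]
  have htu : t * u = 0 := by
    simpa [smul_eq_mul] using Submodule.mem_annihilator.mp ht u (RingHom.mem_ker.mpr hu)
  rw [← (IsLocalization.map_units TE s).mul_left_eq_zero, mul_assoc, hus, ← map_mul, htu, map_zero]

theorem algebraMap_eq_smul_of_mem_annihilator_ker [IsReduced T] [IsFractionRing O E]
    [Algebra O TE] [IsScalarTower O E TE]
    (hlamE : ∀ t : T, lamE (algebraMap T TE t) = algebraMap O E (lam t)) {e : TE}
    (he1 : lamE e = 1) (he2 : ∀ P : Ideal TE, P.IsPrime → P ≠ RingHom.ker lamE → e ∈ P)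
    {t : T} (ht : t ∈ (RingHom.ker lam).annihilator) :
    algebraMap T TE t = lam t • e := by
  have := IsLocalization.isReduced (Algebra.algebraMapSubmonoid T (nonZeroDivisors O)) (S := TE)
  have h1e : algebraMap T TE t * (1 - e) = 0 :=
    algebraMap_mul_eq_zero_of_mem_annihilator_ker hlamE ht (by simp [he1])
  calc algebraMap T TE t = algebraMap T TE t * e := by linear_combination h1e
    _ = lamE (algebraMap T TE t) • e := lamE.mul_eq_smul_of_forall_isPrime_ne_ker he2 _
    _ = lam t • e := by rw [hlamE, algebraMap_smul]

end Congruence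

section CongruenceModule

variable {O : Type*} [CommRing O] {TE : Type*} [CommRing TE] [Algebra O TE]
  {M : Type*} [AddCommGroup M] [Module O M]
  {ME : Type*} [AddCommGroup ME] [Module O ME] [Module TE ME] [IsScalarTower O TE ME]
  {e : TE} {iota : M →ₗ[O] ME}

theorem smul_mem_range_of_mem_eMsub {a : O} (ha : ∀ m : M, a • e • iota m ∈ LinearMap.range iota)
    {x : ME} (hx : x ∈ eMsub e iota) : a • x ∈ LinearMap.range iota := by
  have : eMsub e iota ≤ (LinearMap.range iota).comap (a • LinearMap.id) :=
    Submodule.span_le.mpr (by rintro _ ⟨m, rfl⟩; exact ha m)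
  exact this hx

theorem mem_annihilator_C0M {a : O} (ha : ∀ m : M, a • e • iota m ∈ LinearMap.range iota) :
    a ∈ Module.annihilator O (C0M e iota) := by
  rw [Module.mem_annihilator]
  intro z
  obtain ⟨⟨x, hx⟩, rfl⟩ := Submodule.Quotient.mk_surjective _ z
  rw [← Submodule.Quotient.mk_smul, Submodule.Quotient.mk_eq_zero]
  exact ⟨Submodule.smul_mem _ a hx, smul_mem_range_of_mem_eMsub ha hx⟩

theorem isPrincipal_eMsub [IsPrincipalIdealRing O] [IsLocalizedModule (nonZeroDivisors O) iota]
    (hrk1 : Nonempty (Module.Basis (Fin 1) O ↥(eMsub e iota ⊓ LinearMap.range iota)))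
    {c : O} (hc : c ∈ nonZeroDivisors O) (hce : ∀ m : M, c • e • iota m ∈ LinearMap.range iota) :
    Module.IsPrincipal O (eMsub e iota) := by
  obtain ⟨b⟩ := hrk1
  let g : eMsub e iota →ₗ[O] ↥(eMsub e iota ⊓ LinearMap.range iota) :=
    LinearMap.codRestrict _ (c • (eMsub e iota).subtype)
      fun x => ⟨Submodule.smul_mem _ c x.2, smul_mem_range_of_mem_eMsub hce x.2⟩
  have hc_inj : Function.Injective fun x : ME => c • x :=
    ((Module.End.isUnit_iff _).mp (IsLocalizedModule.map_units iota ⟨c, hc⟩)).1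
  have hg : Function.Injective g := fun x y hxy =>
    Subtype.ext (hc_inj (congrArg Subtype.val hxy))
  let ε := b.equivFun ≪≫ₗ LinearEquiv.funUnique (Fin 1) O O
  exact Module.isPrincipal_of_injective (j := ε.toLinearMap ∘ₗ g) (ε.injective.comp hg)

end CongruenceModule

theorem statement6_general
    {O : Type*} [CommRing O] [IsDomain O] [IsDiscreteValuationRing O]
    {E : Type*} [Field E] [Algebra O E] [IsFractionRing O E]
    {T : Type*} [CommRing T] [IsReduced T]
    [Algebra O T]
    {TE : Type*} [CommRing TE] [Algebra T TE] [Algebra O TE] [Algebra E TE]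
    [IsScalarTower O T TE] [IsScalarTower O E TE]
    [IsLocalization (Algebra.algebraMapSubmonoid T (nonZeroDivisors O)) TE]
    (lam : T →ₐ[O] O)
    (lamE : TE →ₐ[E] E) (e : TE)
    (hlamE : ∀ t : T, lamE (algebraMap T TE t) = algebraMap O E (lam t))
    (he1 : lamE e = 1)
    (he2 : ∀ P : Ideal TE, P.IsPrime → P ≠ RingHom.ker lamE → e ∈ P)
    {M : Type*} [AddCommGroup M] [Module O M] [Module T M]
    {ME : Type*} [AddCommGroup ME] [Module O ME] [Module TE ME] [IsScalarTower O TE ME]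
    (iota : M →ₗ[O] ME) [IsLocalizedModule (nonZeroDivisors O) iota]
    (hiota : ∀ (t : T) (m : M), iota (t • m) = algebraMap T TE t • iota m)
    (hrk1 : Nonempty (Module.Basis (Fin 1) O ↥(eMsub e iota ⊓ LinearMap.range iota))) :
    (∃ x : C0M e iota, ∀ y : C0M e iota, ∃ c : O, y = c • x) ∧
    Nonempty ((C0M e iota) ≃ₗ[O] (O ⧸ fittingIdeal O (C0M e iota))) ∧
    Ideal.map lam (Submodule.annihilator (RingHom.ker lam)) ≤ fittingIdeal O (C0M e iota) := by
  obtain ⟨c, hc, t₀, hct₀⟩ := exists_smul_eq_algebraMap (O := O) (T := T) e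
  have : Module.IsPrincipal O (eMsub e iota) :=
    isPrincipal_eMsub hrk1 hc fun m => ⟨t₀ • m, by rw [hiota, ← hct₀, smul_assoc]⟩
  have : Module.IsPrincipal O (C0M e iota) := .of_surjective _ (Submodule.mkQ_surjective _)
  have hF : fittingIdeal O (C0M e iota) = Module.annihilator O (C0M e iota) :=
    fittingIdeal_eq_annihilator
  refine ⟨Module.IsPrincipal.exists_forall_eq_smul,
    hF ▸ Module.IsPrincipal.nonempty_linearEquiv_quotient_annihilator, ?_⟩
  rw [hF, Ideal.map_le_iff_le_comap]
  intro t ht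
  have hte := algebraMap_eq_smul_of_mem_annihilator_ker hlamE he1 he2 ht
  rw [Ideal.mem_comap]
  exact mem_annihilator_C0M fun m => ⟨t • m, by rw [hiota, hte, smul_assoc]⟩

/-- In the standard congruence-module setup, if `M_λ = eM ∩ M` is a free
`𝒪`-module of rank `1`, then the congruence module `C₀^λ(M)` is a cyclic `𝒪`-module,
`C₀^λ(M) ≅ 𝒪/η_λ(M)`, and `η_λ(M) ⊇ η_λ = λ(Ann_T(ker λ))`. -/
theorem statement6
    {O : Type*} [CommRing O] [IsDomain O] [IsDiscreteValuationRing O]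
    [IsAdicComplete (IsLocalRing.maximalIdeal O) O]
    {E : Type*} [Field E] [Algebra O E] [IsFractionRing O E]
    {T : Type*} [CommRing T] [IsReduced T] [IsLocalRing T]
    [Algebra O T] [Module.Finite O T] [Module.Flat O T]
    {TE : Type*} [CommRing TE] [Algebra T TE] [Algebra O TE] [Algebra E TE]
    [IsScalarTower O T TE] [IsScalarTower O E TE]
    [IsLocalization (Algebra.algebraMapSubmonoid T (nonZeroDivisors O)) TE]
    (lam : T →ₐ[O] O)
    (lamE : TE →ₐ[E] E) (e : TE)
    (hlamE : ∀ t : T, lamE (algebraMap T TE t) = algebraMap O E (lam t))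
    (he1 : lamE e = 1)
    (he2 : ∀ P : Ideal TE, P.IsPrime → P ≠ RingHom.ker lamE → e ∈ P)
    {M : Type*} [AddCommGroup M] [Module O M] [Module T M] [IsScalarTower O T M]
    [Module.Finite T M] [Module.Free O M]
    {ME : Type*} [AddCommGroup ME] [Module O ME] [Module TE ME] [IsScalarTower O TE ME]
    (iota : M →ₗ[O] ME) [IsLocalizedModule (nonZeroDivisors O) iota]
    (hiota : ∀ (t : T) (m : M), iota (t • m) = algebraMap T TE t • iota m)
    (hrk1 : Nonempty (Module.Basis (Fin 1) O ↥(eMsub e iota ⊓ LinearMap.range iota))) :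
    (∃ x : C0M e iota, ∀ y : C0M e iota, ∃ c : O, y = c • x) ∧
    Nonempty ((C0M e iota) ≃ₗ[O] (O ⧸ fittingIdeal O (C0M e iota))) ∧
    Ideal.map lam (Submodule.annihilator (RingHom.ker lam)) ≤ fittingIdeal O (C0M e iota) :=
  statement6_general lam lamE e hlamE he1 he2 iota hiota hrk1
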